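/- arXiv:1908.11713 — 3 statements merged into one kernel-verified Lean document; each statement's English description precedes it below -/
import Mathlib

section
/- Let {X_n, n ≥ 1} be a sequence of square-integrable real-valued random variables on a probability space, and suppose there exists a sequence of nonnegative constants {ρ_k, k ≥ 1} such that sup_{n ≥ 1} |Cov(X_n, X_{n+k})| ≤ ρ_k for every k ≥ 1. Let {b_n, n ≥ 1} be a sequence of positive reals such that n = O(b_n). Assume that Σ_{n=1}^{∞} Var(X_n)·(log n)² / b_n² < ∞ and that there exists q with 0 ≤ q < 1 such that Σ_{k=1}^{∞} ρ_k / k^q < ∞. Then the series Σ_{i=1}^{∞} (X_i − E[X_i]) / b_i converges almost surely. -/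
/-!
Write `Yᵢ = (Xᵢ - 𝔼Xᵢ) / bᵢ`. Since `bᵢ bⱼ ≥ ij / K² ≥ i^(2-q) (j-i)^q / K²`, the covariances
satisfy `|cov(Yᵢ, Yⱼ)| ≤ K² i^(q-2) ρ_{j-i} / (j-i)^q` for `i < j`, so summing a row of the
covariance matrix costs at most `K² C i^(q-2)` with `C = ∑ ρₖ / k^q`. Hence the partial sums `S`
satisfy `𝔼(S_c - S_a)² ≤ ∑_{a<i≤c} wᵢ` with `wᵢ = Var Yᵢ + 2K²C i^(q-2)`, and `∑ wᵢ log² i < ∞`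
because `q - 2 < -1`.

This is the hypothesis of the Rademacher–Menshov theorem. Chaining through the dyadic
subintervals of `[2ⁿ, 2ⁿ⁺¹]` bounds `(S_N - S_{2ⁿ})²` for all `N` in that block by `n + 1` times
the sum of the squared dyadic increments, whose expectation is at most
`(n + 1) ∑_{2ⁿ<i≤2ⁿ⁺¹} wᵢ`. As `log i ≍ n` on the block, these bounds are summable, so the
oscillation on the blocks tends to `0` and `S_{2ⁿ}` converges, almost surely.
-/

open MeasureTheory ProbabilityTheory Filter Finset Topology

lemma rpow_two_sub_mul_rpow_le {x y q : ℝ} (hx : 0 < x) (hy : 0 ≤ y) (hq0 : 0 ≤ q)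
    (hq1 : q ≤ 1) :
    x ^ (2 - q) * y ^ q ≤ x * (x + y) := by
  have hxy : 0 < x + y := by linarith
  calc x ^ (2 - q) * y ^ q = x * (x ^ (1 - q) * y ^ q) := by
        rw [show 2 - q = 1 + (1 - q) by ring, Real.rpow_add hx, Real.rpow_one, mul_assoc]
    _ ≤ x * ((x + y) ^ (1 - q) * (x + y) ^ q) := by
        gcongr <;> linarith
    _ = x * (x + y) := by rw [← Real.rpow_add hxy]; norm_num

lemma inv_mul_le_mul_rpow {x y u v K q : ℝ} (hx : 0 < x) (hy : 0 < y) (hq0 : 0 ≤ q)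
    (hq1 : q ≤ 1) (hu : 0 < u) (hv : 0 < v) (hxu : x ≤ K * u) (hyv : x + y ≤ K * v) :
    (u * v)⁻¹ ≤ K ^ 2 * x ^ (q - 2) * (y ^ q)⁻¹ := by
  have hK : 0 < K := pos_of_mul_pos_left (hx.trans_le hxu) hu.le
  have hxy : x ^ (2 - q) * y ^ q ≤ K ^ 2 * (u * v) :=
    (rpow_two_sub_mul_rpow_le hx hy.le hq0 hq1).trans <| by
      nlinarith [mul_le_mul hxu hyv (by linarith) (by positivity)]
  calc (u * v)⁻¹ = K ^ 2 / (K ^ 2 * (u * v)) := by field_simp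
    _ ≤ K ^ 2 / (x ^ (2 - q) * y ^ q) := by gcongr
    _ = K ^ 2 * x ^ (q - 2) * (y ^ q)⁻¹ := by
        rw [show q - 2 = -(2 - q) by ring, Real.rpow_neg hx.le]
        field_simp

lemma summable_rpow_mul_log_sq {p : ℝ} (hp : p < -1) :
    Summable fun n : ℕ => (n : ℝ) ^ p * Real.log n ^ 2 := by
  set ε := (-1 - p) / 4 with hε
  have hε0 : 0 < ε := by rw [hε]; linarith
  refine .of_nonneg_of_le (fun n => by positivity) (fun n => ?_)
    ((Real.summable_nat_rpow.2 (by linarith : p + 2 * ε < -1)).div_const (ε ^ 2))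
  have hlog : Real.log n ^ 2 ≤ ((n : ℝ) ^ ε / ε) ^ 2 := by
    rcases Nat.eq_zero_or_pos n with rfl | hn
    · simp [Real.zero_rpow hε0.ne']
    exact pow_le_pow_left₀ (Real.log_nonneg (by exact_mod_cast hn))
      (Real.log_le_rpow_div n.cast_nonneg hε0) 2
  calc (n : ℝ) ^ p * Real.log n ^ 2 ≤ (n : ℝ) ^ p * ((n : ℝ) ^ ε / ε) ^ 2 := by gcongr
    _ = (n : ℝ) ^ (p + 2 * ε) / ε ^ 2 := by
        rw [div_pow, ← Real.rpow_natCast, ← Real.rpow_mul n.cast_nonneg,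
          Real.rpow_add' n.cast_nonneg (by linarith)]
        push_cast; ring_nf

lemma sq_succ_le_mul_log_sq {n i : ℕ} (hi : 2 ^ n < i) :
    ((n : ℝ) + 1) ^ 2 ≤ (2 / Real.log 2) ^ 2 * Real.log i ^ 2 := by
  have h2i : 2 ^ (n + 1) ≤ i ^ 2 := by
    have : 2 ≤ i := by have := Nat.one_le_two_pow (n := n); omega
    calc 2 ^ (n + 1) = 2 * 2 ^ n := by ring
      _ ≤ i * i := Nat.mul_le_mul this hi.le
      _ = i ^ 2 := (sq i).symm
  have hlog : ((n : ℝ) + 1) * Real.log 2 ≤ 2 * Real.log i := by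
    have := Real.log_le_log (by positivity) (Nat.cast_le (α := ℝ).2 h2i)
    rwa [Nat.cast_pow, Nat.cast_pow, Real.log_pow, Real.log_pow, Nat.cast_ofNat,
      Nat.cast_add_one] at this
  have hlog2 := Real.log_pos one_lt_two
  rw [div_pow, div_mul_eq_mul_div, le_div_iff₀ (by positivity)]
  nlinarith [pow_le_pow_left₀ (by positivity) hlog 2]

lemma sum_sum_le_sum_add_two_mul_sum_abs {ι : Type*} [LinearOrder ι] (s : Finset ι)
    (c : ι → ι → ℝ) (hc : ∀ i j, c i j = c j i) :
    ∑ i ∈ s, ∑ j ∈ s, c i j ≤ ∑ i ∈ s, (c i i + 2 * ∑ j ∈ s with i < j, |c i j|) := by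
  let D : ι → ι → ℝ := fun i j => if i < j then |c i j| else if i = j then c i i / 2 else 0
  have hD : ∀ i j, c i j ≤ D i j + D j i := by
    intro i j
    rcases lt_trichotomy i j with h | rfl | h
    · simp [D, h, h.ne', not_lt_of_gt h, le_abs_self]
    · simp [D]
    · simp [D, h, h.ne', not_lt_of_gt h, hc i j, le_abs_self]
  have hrow : ∀ i ∈ s, ∑ j ∈ s, D i j = c i i / 2 + ∑ j ∈ s with i < j, |c i j| := by
    intro i hi
    have hsplit (j : ι) :
        D i j = (if i < j then |c i j| else 0) + if i = j then c i i / 2 else 0 := by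
      rcases lt_trichotomy i j with h | rfl | h
      · simp [D, h, h.ne]
      · simp [D]
      · simp [D, h.ne', not_lt_of_gt h]
    rw [sum_congr rfl fun j _ => hsplit j, sum_add_distrib, sum_ite_eq, if_pos hi, sum_filter]
    ring
  calc ∑ i ∈ s, ∑ j ∈ s, c i j ≤ ∑ i ∈ s, ∑ j ∈ s, (D i j + D j i) :=
        sum_le_sum fun i _ => sum_le_sum fun j _ => hD i j
    _ = 2 * ∑ i ∈ s, ∑ j ∈ s, D i j := by
        simp only [sum_add_distrib]
        rw [sum_comm (f := fun i j => D j i)]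
        ring
    _ = ∑ i ∈ s, (c i i + 2 * ∑ j ∈ s with i < j, |c i j|) := by
        rw [mul_sum]
        exact sum_congr rfl fun i hi => by rw [hrow i hi]; ring

lemma sum_filter_lt_le_tsum {F : ℕ → ℝ} (hF : Summable F) (hF0 : ∀ k, 0 ≤ F k) (s : Finset ℕ)
    (i : ℕ) : ∑ j ∈ s with i < j, F (j - (i + 1)) ≤ ∑' k, F k := by
  rw [← sum_image (g := fun j => j - (i + 1)) fun j hj j' hj' h => by
    simp only [coe_filter, Set.mem_ofPred_eq] at hj hj' h; omega]
  exact hF.sum_le_tsum _ fun k _ => hF0 k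

lemma sum_range_sum_Ioc_eq_sum_Ioc {M : Type*} [AddCommMonoid M] {f : ℕ → ℕ} (hf : Monotone f)
    (g : ℕ → M) (N : ℕ) :
    ∑ n ∈ range N, ∑ i ∈ Ioc (f n) (f (n + 1)), g i = ∑ i ∈ Ioc (f 0) (f N), g i := by
  induction N with
  | zero => simp
  | succ N ih =>
    rw [sum_range_succ, ih, sum_Ioc_consecutive _ (hf (Nat.zero_le N)) (hf N.le_succ)]

lemma summable_sum_Ioc_of_summable {f : ℕ → ℕ} (hf : Monotone f) {g : ℕ → ℝ}
    (hg : Summable g) (hg0 : ∀ i, 0 ≤ g i) :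
    Summable fun n => ∑ i ∈ Ioc (f n) (f (n + 1)), g i :=
  summable_of_sum_range_le (fun _ => sum_nonneg fun i _ => hg0 i) fun N => by
    rw [sum_range_sum_Ioc_eq_sum_Ioc hf]
    exact hg.sum_le_tsum _ fun i _ => hg0 i

lemma summable_abs_of_summable_sq_mul_sq {a : ℕ → ℝ}
    (h : Summable fun n : ℕ => ((n : ℝ) + 1) ^ 2 * a n ^ 2) : Summable fun n => |a n| := by
  have hinv : Summable fun n : ℕ => (((n : ℝ) + 1)⁻¹) ^ 2 := by
    simpa [inv_pow] using (summable_nat_add_iff 1).2 (Real.summable_one_div_nat_pow.2 one_lt_two)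
  refine .of_nonneg_of_le (fun _ => abs_nonneg _) (fun n => ?_) ((h.add hinv).div_const 2)
  have hn : ((n : ℝ) + 1) * ((n : ℝ) + 1)⁻¹ = 1 := mul_inv_cancel₀ (by positivity)
  have := two_mul_le_add_sq (((n : ℝ) + 1) * |a n|) ((n : ℝ) + 1)⁻¹
  rw [mul_pow, sq_abs, mul_assoc, mul_right_comm, hn, one_mul] at this
  linarith

lemma sum_Icc_one_sub_sum_Icc_one {M : Type*} [AddCommGroup M] (f : ℕ → M) {a c : ℕ}
    (h : a ≤ c) : ∑ i ∈ Icc 1 c, f i - ∑ i ∈ Icc 1 a, f i = ∑ i ∈ Ioc a c, f i := by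
  have hIcc (n : ℕ) : Icc 1 n = Ioc 0 n := Icc_add_one_left_eq_Ioc 0 n
  rw [hIcc, hIcc, ← sum_Ioc_consecutive _ (Nat.zero_le a) h, add_sub_cancel_left]

lemma tendsto_nat_log_atTop {b : ℕ} (hb : 1 < b) : Tendsto (Nat.log b) atTop atTop :=
  tendsto_atTop_atTop.2 fun n => ⟨b ^ n, fun _ hN => Nat.le_log_of_pow_le hb hN⟩

lemma exists_tendsto_of_summable_dyadic {t r : ℕ → ℝ}
    (hΔ : Summable fun n => t (2 ^ (n + 1)) - t (2 ^ n)) (hr : Tendsto r atTop (𝓝 0))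
    (hosc : ∀ n N, 2 ^ n ≤ N → N ≤ 2 ^ (n + 1) → |t N - t (2 ^ n)| ≤ r n) :
    ∃ L, Tendsto t atTop (𝓝 L) := by
  have hdyadic : Tendsto (fun n => t (2 ^ n)) atTop
      (𝓝 (t 1 + ∑' n, (t (2 ^ (n + 1)) - t (2 ^ n)))) := by
    refine (hΔ.hasSum.tendsto_sum_nat.const_add (t 1)).congr fun n => ?_
    rw [Finset.sum_range_sub (fun k => t (2 ^ k)), pow_zero]
    ring
  have hosc' : Tendsto (fun N => t N - t (2 ^ Nat.log 2 N)) atTop (𝓝 0) := by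
    refine squeeze_zero_norm' ?_ (hr.comp (tendsto_nat_log_atTop one_lt_two))
    filter_upwards [eventually_ne_atTop 0] with N hN
    exact hosc _ _ (Nat.pow_log_le_self 2 hN) (Nat.lt_pow_succ_log_self (by norm_num) N).le
  exact ⟨_, by simpa using (hdyadic.comp (tendsto_nat_log_atTop one_lt_two)).add hosc'⟩

/-- The sum of `(t ((m + 1) * 2 ^ k) - t (m * 2 ^ k)) ^ 2` over all dyadic subintervals
`[m * 2 ^ k, (m + 1) * 2 ^ k]` of `[j * 2 ^ l, (j + 1) * 2 ^ l]`. -/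
def dyadicSqIncr (t : ℕ → ℝ) : ℕ → ℕ → ℝ
  | 0, j => (t (j + 1) - t j) ^ 2
  | l + 1, j => dyadicSqIncr t l (2 * j) + dyadicSqIncr t l (2 * j + 1) +
      (t ((j + 1) * 2 ^ (l + 1)) - t (j * 2 ^ (l + 1))) ^ 2

namespace dyadicSqIncr

variable (t : ℕ → ℝ)

lemma nonneg : ∀ l j, 0 ≤ dyadicSqIncr t l j
  | 0, _ => sq_nonneg _
  | l + 1, j => by
    have := nonneg l (2 * j)
    have := nonneg l (2 * j + 1)
    simp only [dyadicSqIncr]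
    positivity

lemma sq_sub_le (l j : ℕ) :
    (t ((j + 1) * 2 ^ l) - t (j * 2 ^ l)) ^ 2 ≤ dyadicSqIncr t l j := by
  cases l with
  | zero => simp [dyadicSqIncr]
  | succ l =>
    have := nonneg t l (2 * j)
    have := nonneg t l (2 * j + 1)
    simp only [dyadicSqIncr]
    linarith

/-- Every point of a dyadic interval of level `l` is reached from its left end by at most one
dyadic increment per level; Cauchy–Schwarz over the `l + 1` levels gives the factor. -/
lemma sq_sub_le_mul (l : ℕ) : ∀ j N, j * 2 ^ l ≤ N → N ≤ (j + 1) * 2 ^ l →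
    (t N - t (j * 2 ^ l)) ^ 2 ≤ (l + 1) * dyadicSqIncr t l j := by
  induction l with
  | zero =>
    intro j N hjN hNj
    simp only [pow_zero, mul_one] at hjN hNj
    obtain rfl | rfl : N = j ∨ N = j + 1 := by omega
    · simpa using nonneg t 0 N
    · simp [dyadicSqIncr]
  | succ l ih =>
    intro j N hjN hNj
    have hleft := nonneg t l (2 * j)
    have hright := nonneg t l (2 * j + 1)
    have hstart : j * 2 ^ (l + 1) = 2 * j * 2 ^ l := by ring
    have hend : (j + 1) * 2 ^ (l + 1) = (2 * j + 1 + 1) * 2 ^ l := by ring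
    simp only [dyadicSqIncr, hstart, hend] at hjN hNj ⊢
    push_cast
    rcases le_total N ((2 * j + 1) * 2 ^ l) with hN | hN
    · have := ih (2 * j) N hjN hN
      nlinarith [sq_nonneg (t ((2 * j + 1 + 1) * 2 ^ l) - t (2 * j * 2 ^ l))]
    · -- split at the midpoint and use `(a + b)² ≤ (l + 2) a² + (l + 2) b² / (l + 1)`
      have hb := ih (2 * j + 1) N hN hNj
      have ha := sq_sub_le t l (2 * j)
      set a := t ((2 * j + 1) * 2 ^ l) - t (2 * j * 2 ^ l)
      set b := t N - t ((2 * j + 1) * 2 ^ l)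
      have hsplit : t N - t (2 * j * 2 ^ l) = a + b := by ring
      have htop := sq_nonneg (t ((2 * j + 1 + 1) * 2 ^ l) - t (2 * j * 2 ^ l))
      have hl : (0 : ℝ) < l + 1 := by positivity
      have key : ((l : ℝ) + 1) * (a + b) ^ 2 ≤ ((l : ℝ) + 1) * ((l + 1 + 1) *
          (dyadicSqIncr t l (2 * j) + dyadicSqIncr t l (2 * j + 1) +
            (t ((2 * j + 1 + 1) * 2 ^ l) - t (2 * j * 2 ^ l)) ^ 2)) := by
        have h2 : (0 : ℝ) ≤ (l + 1) * (l + 1 + 1) := by positivity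
        nlinarith [sq_nonneg (((l : ℝ) + 1) * a - b), mul_le_mul_of_nonneg_left ha h2,
          mul_le_mul_of_nonneg_left hb (by positivity : (0 : ℝ) ≤ l + 1 + 1), mul_nonneg h2 htop]
      rw [hsplit]
      exact le_of_mul_le_mul_left key hl

end dyadicSqIncr

section RademacherMenshov

variable {Ω : Type*} [MeasurableSpace Ω] {μ : Measure Ω}

lemma ae_summable_of_summable_integral {f : ℕ → Ω → ℝ} (hf : ∀ n, Integrable (f n) μ)
    (h0 : ∀ n ω, 0 ≤ f n ω) (hs : Summable fun n => ∫ ω, f n ω ∂μ) :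
    ∀ᵐ ω ∂μ, Summable fun n => f n ω := by
  have hfin : ∑' n, eLpNorm (f n) 1 μ ≠ ⊤ := by
    simp_rw [eLpNorm_one_eq_lintegral_enorm, ← ofReal_integral_norm_eq_lintegral_enorm (hf _),
      Real.norm_of_nonneg (h0 _ _), ← ENNReal.ofReal_tsum_of_nonneg
        (fun n => integral_nonneg (h0 n)) hs]
    exact ENNReal.ofReal_ne_top
  filter_upwards [summable_norm_of_tsum_eLpNorm_ne_top le_rfl
    (fun n => (hf n).aestronglyMeasurable) hfin] with ω hω
  simpa only [Real.norm_of_nonneg (h0 _ ω)] using hω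

variable {S : ℕ → Ω → ℝ} {w : ℕ → ℝ}

lemma integrable_dyadicSqIncr (hS : ∀ n, MemLp (S n) 2 μ) (l j : ℕ) :
    Integrable (fun ω => dyadicSqIncr (S · ω) l j) μ := by
  induction l generalizing j with
  | zero => exact ((hS _).sub (hS _)).integrable_sq
  | succ l ih => exact ((ih _).add (ih _)).add ((hS _).sub (hS _)).integrable_sq

lemma integral_dyadicSqIncr_le [IsFiniteMeasure μ] (hS : ∀ n, MemLp (S n) 2 μ)
    (hinc : ∀ a b, a ≤ b → ∫ ω, (S b ω - S a ω) ^ 2 ∂μ ≤ ∑ i ∈ Ioc a b, w i) (l j : ℕ) :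
    ∫ ω, dyadicSqIncr (S · ω) l j ∂μ ≤
      (l + 1) * ∑ i ∈ Ioc (j * 2 ^ l) ((j + 1) * 2 ^ l), w i := by
  induction l generalizing j with
  | zero => simpa [dyadicSqIncr] using hinc j (j + 1) j.le_succ
  | succ l ih =>
    have hL := integrable_dyadicSqIncr hS l (2 * j)
    have hR := integrable_dyadicSqIncr hS l (2 * j + 1)
    have hT : Integrable
        (fun ω => (S ((j + 1) * 2 ^ (l + 1)) ω - S (j * 2 ^ (l + 1)) ω) ^ 2) μ :=
      ((hS _).sub (hS _)).integrable_sq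
    have htop := hinc _ _ (Nat.mul_le_mul_right (2 ^ (l + 1)) j.le_succ)
    have hsplit : ∑ i ∈ Ioc (j * 2 ^ (l + 1)) ((j + 1) * 2 ^ (l + 1)), w i =
        ∑ i ∈ Ioc (2 * j * 2 ^ l) ((2 * j + 1) * 2 ^ l), w i +
          ∑ i ∈ Ioc ((2 * j + 1) * 2 ^ l) ((2 * j + 1 + 1) * 2 ^ l), w i := by
      rw [sum_Ioc_consecutive _ (Nat.mul_le_mul_right _ (by omega))
        (Nat.mul_le_mul_right _ (by omega))]
      ring_nf
    simp only [dyadicSqIncr]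
    rw [integral_add (hL.fun_add hR) hT, integral_add hL hR]
    have := ih (2 * j)
    have := ih (2 * j + 1)
    rw [hsplit] at htop ⊢
    push_cast
    linarith

lemma summable_sq_mul_sum_Ioc_two_pow (hw0 : ∀ i, 0 ≤ w i)
    (hw : Summable fun i : ℕ => w i * Real.log i ^ 2) :
    Summable fun n : ℕ => ((n : ℝ) + 1) ^ 2 * ∑ i ∈ Ioc (2 ^ n) (2 ^ (n + 1)), w i := by
  refine .of_nonneg_of_le (fun n => mul_nonneg (sq_nonneg _) (sum_nonneg fun i _ => hw0 i))
    (fun n => ?_) ((summable_sum_Ioc_of_summable (pow_right_mono₀ one_le_two) hw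
      (fun i => mul_nonneg (hw0 i) (sq_nonneg _))).mul_left ((2 / Real.log 2) ^ 2))
  rw [mul_sum, mul_sum]
  refine sum_le_sum fun i hi => ?_
  calc ((n : ℝ) + 1) ^ 2 * w i ≤ (2 / Real.log 2) ^ 2 * Real.log i ^ 2 * w i :=
        mul_le_mul_of_nonneg_right (sq_succ_le_mul_log_sq (mem_Ioc.1 hi).1) (hw0 i)
    _ = (2 / Real.log 2) ^ 2 * (w i * Real.log i ^ 2) := by ring

/-- The Rademacher–Menshov theorem. -/
theorem ae_exists_tendsto_of_integral_sq_sub_le [IsFiniteMeasure μ] (hS : ∀ n, MemLp (S n) 2 μ)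
    (hw0 : ∀ i, 0 ≤ w i) (hw : Summable fun i : ℕ => w i * Real.log i ^ 2)
    (hinc : ∀ a b, a ≤ b → ∫ ω, (S b ω - S a ω) ^ 2 ∂μ ≤ ∑ i ∈ Ioc a b, w i) :
    ∀ᵐ ω ∂μ, ∃ L, Tendsto (fun n => S n ω) atTop (𝓝 L) := by
  have hA := summable_sq_mul_sum_Ioc_two_pow hw0 hw
  have hpow (n : ℕ) : (1 + 1) * 2 ^ n = 2 ^ (n + 1) := by ring
  have hosc : ∀ᵐ ω ∂μ, Summable fun n : ℕ => ((n : ℝ) + 1) * dyadicSqIncr (S · ω) n 1 := by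
    refine ae_summable_of_summable_integral
      (fun n => (integrable_dyadicSqIncr hS n 1).const_mul _)
      (fun n ω => mul_nonneg (by positivity) (dyadicSqIncr.nonneg _ _ _))
      (.of_nonneg_of_le (fun n => integral_nonneg fun ω =>
        mul_nonneg (by positivity) (dyadicSqIncr.nonneg _ _ _)) (fun n => ?_) hA)
    have := integral_dyadicSqIncr_le hS hinc n 1
    rw [one_mul, hpow] at this
    rw [integral_const_mul, sq, mul_assoc]
    exact mul_le_mul_of_nonneg_left this (by positivity)
  have hΔ : ∀ᵐ ω ∂μ, Summable fun n : ℕ =>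
      ((n : ℝ) + 1) ^ 2 * (S (2 ^ (n + 1)) ω - S (2 ^ n) ω) ^ 2 := by
    refine ae_summable_of_summable_integral
      (fun n => ((hS _).sub (hS _)).integrable_sq.const_mul _)
      (fun n ω => by positivity)
      (.of_nonneg_of_le (fun n => integral_nonneg fun ω => by positivity) (fun n => ?_) hA)
    rw [integral_const_mul]
    exact mul_le_mul_of_nonneg_left (hinc _ _ (Nat.pow_le_pow_right two_pos n.le_succ))
      (by positivity)
  filter_upwards [hosc, hΔ] with ω hosc hΔ
  refine exists_tendsto_of_summable_dyadic (summable_abs_of_summable_sq_mul_sq hΔ).of_abs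
    (by simpa using hosc.tendsto_atTop_zero.sqrt) fun n N h1 h2 => Real.abs_le_sqrt ?_
  have := dyadicSqIncr.sq_sub_le_mul (S · ω) n 1 N (by rwa [one_mul]) (by rwa [hpow])
  rwa [one_mul] at this

end RademacherMenshov

section Covariance

variable {Ω : Type*} [MeasurableSpace Ω] {μ : Measure Ω}

lemma variance_sum_le {ι : Type*} [LinearOrder ι] [IsFiniteMeasure μ] {s : Finset ι}
    {Y : ι → Ω → ℝ} (hY : ∀ i ∈ s, MemLp (Y i) 2 μ) :
    Var[∑ i ∈ s, Y i; μ] ≤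
      ∑ i ∈ s, (Var[Y i; μ] + 2 * ∑ j ∈ s with i < j, |cov[Y i, Y j; μ]|) := by
  rw [variance_sum' hY]
  refine (sum_sum_le_sum_add_two_mul_sum_abs s _ fun i j => covariance_comm _ _).trans_eq ?_
  exact sum_congr rfl fun i hi => by rw [covariance_self (hY i hi).aemeasurable]

lemma integral_sq_sum_le_of_abs_covariance_le [IsFiniteMeasure μ] {Y : ℕ → Ω → ℝ}
    {s : Finset ℕ} (hY : ∀ i ∈ s, MemLp (Y i) 2 μ) (hY0 : ∀ i ∈ s, μ[Y i] = 0)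
    {g F : ℕ → ℝ} (hg : ∀ i ∈ s, 0 ≤ g i) (hF : Summable F) (hF0 : ∀ k, 0 ≤ F k)
    (hcov : ∀ i ∈ s, ∀ j ∈ s, i < j → |cov[Y i, Y j; μ]| ≤ g i * F (j - (i + 1))) :
    ∫ ω, (∑ i ∈ s, Y i ω) ^ 2 ∂μ ≤ ∑ i ∈ s, (Var[Y i; μ] + 2 * (g i * ∑' k, F k)) := by
  have hmean : μ[∑ i ∈ s, Y i] = 0 := by
    simp_rw [Finset.sum_apply]
    rw [integral_finsetSum _ fun i hi => (hY i hi).integrable one_le_two]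
    exact sum_eq_zero hY0
  have hvar := variance_of_integral_eq_zero (memLp_finsetSum' s hY).aemeasurable hmean
  simp only [Finset.sum_apply] at hvar
  rw [← hvar]
  refine (variance_sum_le hY).trans (sum_le_sum fun i hi => ?_)
  gcongr
  calc ∑ j ∈ s with i < j, |cov[Y i, Y j; μ]| ≤ ∑ j ∈ s with i < j, g i * F (j - (i + 1)) :=
        sum_le_sum fun j hj => by
          rw [mem_filter] at hj
          exact hcov i hi j hj.1 hj.2
    _ ≤ g i * ∑' k, F k := by
        rw [← mul_sum]
        exact mul_le_mul_of_nonneg_left (sum_filter_lt_le_tsum hF hF0 s i) (hg i hi)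

variable [IsProbabilityMeasure μ]

lemma memLp_sub_integral_div {U : Ω → ℝ} (hU : MemLp U 2 μ) (a : ℝ) :
    MemLp (fun ω => (U ω - μ[U]) / a) 2 μ := by
  simpa only [div_eq_inv_mul, Pi.sub_apply] using (hU.sub (memLp_const (μ[U]))).const_mul a⁻¹

lemma covariance_sub_integral_div {U V : Ω → ℝ} (hU : MemLp U 2 μ) (hV : MemLp V 2 μ)
    (a c : ℝ) :
    cov[fun ω => (U ω - μ[U]) / a, fun ω => (V ω - μ[V]) / c; μ] =
      (∫ ω, U ω * V ω ∂μ - μ[U] * μ[V]) / (a * c) := by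
  rw [covariance_fun_div_left, covariance_fun_div_right,
    covariance_sub_const_left (hU.integrable one_le_two),
    covariance_sub_const_right (hV.integrable one_le_two), covariance_eq_sub hU hV, div_div,
    mul_comm c]
  rfl

lemma variance_sub_integral_div {U : Ω → ℝ} (hU : MemLp U 2 μ) (a : ℝ) :
    Var[fun ω => (U ω - μ[U]) / a; μ] = (∫ ω, U ω ^ 2 ∂μ - μ[U] ^ 2) / a ^ 2 := by
  simp_rw [div_eq_inv_mul]
  rw [variance_const_mul, variance_sub_const hU.aestronglyMeasurable, variance_eq_sub hU, inv_pow]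
  rfl

lemma abs_covariance_sub_integral_div_le {U V : Ω → ℝ} (hU : MemLp U 2 μ) (hV : MemLp V 2 μ)
    {r u v K q : ℝ} {i k : ℕ} (hi : 1 ≤ i) (hq0 : 0 ≤ q) (hq1 : q ≤ 1)
    (hcov : |∫ ω, U ω * V ω ∂μ - μ[U] * μ[V]| ≤ r) (hu : 0 < u) (hv : 0 < v)
    (hiu : (i : ℝ) ≤ K * u) (hkv : ((i + (k + 1) : ℕ) : ℝ) ≤ K * v) :
    |cov[fun ω => (U ω - μ[U]) / u, fun ω => (V ω - μ[V]) / v; μ]| ≤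
      K ^ 2 * (i : ℝ) ^ (q - 2) * (r / ((k : ℝ) + 1) ^ q) := by
  have hr : 0 ≤ r := (abs_nonneg _).trans hcov
  rw [covariance_sub_integral_div hU hV, abs_div, abs_of_pos (mul_pos hu hv), div_eq_mul_inv]
  push_cast at hkv
  calc _ ≤ r * (K ^ 2 * (i : ℝ) ^ (q - 2) * (((k : ℝ) + 1) ^ q)⁻¹) :=
        mul_le_mul hcov (inv_mul_le_mul_rpow (by exact_mod_cast hi) (by positivity) hq0 hq1 hu hv
          hiu (by linarith)) (by positivity) hr
    _ = K ^ 2 * (i : ℝ) ^ (q - 2) * (r / ((k : ℝ) + 1) ^ q) := by ring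

lemma integral_sq_sum_Ioc_sub_integral_div_le {X : ℕ → Ω → ℝ}
    (hX : ∀ n, 1 ≤ n → MemLp (X n) 2 μ) {ρ : ℕ → ℝ} (hρ : ∀ k, 1 ≤ k → 0 ≤ ρ k)
    (hcov : ∀ k, 1 ≤ k → ∀ n, 1 ≤ n →
      |∫ ω, X n ω * X (n + k) ω ∂μ - μ[X n] * μ[X (n + k)]| ≤ ρ k)
    {b : ℕ → ℝ} (hb : ∀ n, 1 ≤ n → 0 < b n) {K q : ℝ} (hK : ∀ n : ℕ, 1 ≤ n → (n : ℝ) ≤ K * b n)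
    (hq0 : 0 ≤ q) (hq1 : q ≤ 1) (hρsum : Summable fun k : ℕ => ρ (k + 1) / ((k : ℝ) + 1) ^ q)
    (a c : ℕ) :
    ∫ ω, (∑ i ∈ Ioc a c, (X i ω - μ[X i]) / b i) ^ 2 ∂μ ≤
      ∑ i ∈ Ioc a c, (Var[fun ω => (X i ω - μ[X i]) / b i; μ] +
        2 * (K ^ 2 * (i : ℝ) ^ (q - 2) * ∑' k : ℕ, ρ (k + 1) / ((k : ℝ) + 1) ^ q)) := by
  have hpos {i : ℕ} (hi : i ∈ Ioc a c) : 1 ≤ i := by have := (mem_Ioc.1 hi).1; omega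
  refine integral_sq_sum_le_of_abs_covariance_le
    (fun i hi => memLp_sub_integral_div (hX i (hpos hi)) (b i)) (fun i hi => ?_)
    (fun i _ => by positivity) hρsum (fun k => div_nonneg (hρ _ k.succ_pos) (by positivity))
    fun i hi j hj hij => ?_
  · simp [integral_div, integral_sub ((hX i (hpos hi)).integrable one_le_two)]
  · obtain ⟨k, rfl⟩ : ∃ k, j = i + (k + 1) := ⟨j - (i + 1), by omega⟩
    rw [show i + (k + 1) - (i + 1) = k by omega]
    exact abs_covariance_sub_integral_div_le (hX i (hpos hi)) (hX _ (hpos hj)) (hpos hi) hq0 hq1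
      (hcov (k + 1) k.succ_pos i (hpos hi)) (hb i (hpos hi)) (hb _ (hpos hj)) (hK i (hpos hi))
      (hK _ (hpos hj))

end Covariance

/-- Hu–Li–Pan–Sung 2008; Theorem 5 of the paper's appendix,
first conclusion.
Let `{X_n, n ≥ 1}` be square-integrable random variables with
`sup_{n ≥ 1} |Cov(X_n, X_{n+k})| ≤ ρ_k` for all `k ≥ 1`, where `ρ_k ≥ 0`.
Let `b_n > 0` with `n = O(b_n)`.  If `∑_{n≥1} Var(X_n) (log n)^2 / b_n^2 < ∞` and
`∑_{k≥1} ρ_k / k^q < ∞` for some `0 ≤ q < 1`, then the series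
`∑_{i≥1} (X_i - E[X_i]) / b_i` converges almost surely. -/
theorem statement3
    {Ω : Type*} [MeasurableSpace Ω] (μ : Measure Ω) [IsProbabilityMeasure μ]
    (X : ℕ → Ω → ℝ) (hX : ∀ n, 1 ≤ n → MemLp (X n) 2 μ)
    (ρ : ℕ → ℝ) (hρ : ∀ k, 1 ≤ k → 0 ≤ ρ k)
    (hcov : ∀ k, 1 ≤ k → ∀ n, 1 ≤ n →
      |(∫ ω, X n ω * X (n + k) ω ∂μ)
        - (∫ ω, X n ω ∂μ) * (∫ ω, X (n + k) ω ∂μ)| ≤ ρ k)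
    (b : ℕ → ℝ) (hb : ∀ n, 1 ≤ n → 0 < b n)
    (hbO : ∃ K : ℝ, ∀ n : ℕ, 1 ≤ n → (n : ℝ) ≤ K * b n)
    (hvar : Summable (fun n : ℕ =>
      ((∫ ω, X (n + 1) ω ^ 2 ∂μ) - (∫ ω, X (n + 1) ω ∂μ) ^ 2)
        * Real.log (n + 1) ^ 2 / b (n + 1) ^ 2))
    (hq : ∃ q : ℝ, 0 ≤ q ∧ q < 1 ∧
      Summable (fun k : ℕ => ρ (k + 1) / ((k : ℝ) + 1) ^ q)) :
    ∀ᵐ ω ∂μ, ∃ L : ℝ, Tendsto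
      (fun N => ∑ i ∈ Finset.Icc 1 N, (X i ω - ∫ ω', X i ω' ∂μ) / b i)
      atTop (nhds L) := by
  obtain ⟨q, hq0, hq1, hρsum⟩ := hq
  obtain ⟨K, hK⟩ := hbO
  set Y : ℕ → Ω → ℝ := fun i ω => (X i ω - ∫ ω', X i ω' ∂μ) / b i
  set C := ∑' k : ℕ, ρ (k + 1) / ((k : ℝ) + 1) ^ q
  have hC0 : 0 ≤ C := tsum_nonneg fun k => div_nonneg (hρ _ k.succ_pos) (by positivity)
  have hw : Summable fun i : ℕ =>
      (Var[Y i; μ] + 2 * (K ^ 2 * (i : ℝ) ^ (q - 2) * C)) * Real.log i ^ 2 := by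
    have hV : Summable fun i : ℕ => Var[Y i; μ] * Real.log i ^ 2 := by
      refine (summable_nat_add_iff 1).1 (hvar.congr fun n => ?_)
      rw [variance_sub_integral_div (hX (n + 1) n.succ_pos)]
      push_cast
      ring
    refine (hV.add ((summable_rpow_mul_log_sq (by linarith : q - 2 < -1)).mul_left
      (2 * K ^ 2 * C))).congr fun i => ?_
    ring
  refine ae_exists_tendsto_of_integral_sq_sub_le (S := fun N ω => ∑ i ∈ Icc 1 N, Y i ω)
    (fun N => memLp_finsetSum _ fun i hi => memLp_sub_integral_div (hX i (mem_Icc.1 hi).1) (b i))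
    (fun i => by have := variance_nonneg (Y i) μ; positivity) hw fun a c hac => ?_
  simp_rw [sum_Icc_one_sub_sum_Icc_one _ hac]
  exact integral_sq_sum_Ioc_sub_integral_div_le hX hρ hcov hb hK hq0 hq1.le hρsum a c
end

section
/- Let h ≥ 1 be a natural number, let x : ℕ → ℝ be a deterministic sequence with |x_k| ≤ L for all k and some finite L, let (η_k)_{k ∈ ℕ} be independent and identically distributed real-valued random variables with E[|η_0|^{2h}] < ∞, write m_d = E[η_0^d], and set y_k = x_k + η_k. Then (1/N) · Σ_{k=0}^{N−1} ( y_k^h − Σ_{d=0}^{h} C(h,d) · x_k^{h−d} · m_d ) → 0 almost surely as N → ∞. -/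
/-!
Put `Z k = (x k + η k) ^ h`. By the binomial theorem `E[Z k] = ∑ d, C(h,d) x_k^(h-d) m_d`, so the
claim is a strong law of large numbers for the independent but not identically distributed
`Z k`. Their variances are bounded uniformly in `k` by `2^(2h-1) (L^(2h) + E|η 0|^(2h))`, and for
pairwise independent variables with bounded variances the strong law follows from Rajchman's
argument: Chebyshev and Borel–Cantelli give convergence along the squares `n²`, and the same
estimate, summed over the `2n + 1` indices of the block `[n², (n+1)²)`, controls the oscillation of
the partial sums between consecutive squares.
-/

open MeasureTheory ProbabilityTheory Filter Finset
open scoped ENNReal Topology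

noncomputable def sqBlockDeviation (s : ℕ → ℝ) (n : ℕ) : ℝ :=
  (Ico (n ^ 2) ((n + 1) ^ 2)).sup'
    (nonempty_Ico.2 (Nat.pow_lt_pow_left n.lt_succ_self two_ne_zero))
    fun N => |s N - s (n ^ 2)|

lemma exists_sqBlockDeviation_eq (s : ℕ → ℝ) (n : ℕ) :
    ∃ N ∈ Ico (n ^ 2) ((n + 1) ^ 2), sqBlockDeviation s n = |s N - s (n ^ 2)| :=
  exists_mem_eq_sup' _ _

lemma tendsto_div_of_tendsto_sq_of_sqBlockDeviation {s : ℕ → ℝ}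
    (hsq : Tendsto (fun n : ℕ => s (n ^ 2) / (n : ℝ) ^ 2) atTop (𝓝 0))
    (hdev : Tendsto (fun n : ℕ => sqBlockDeviation s n / (n : ℝ) ^ 2) atTop (𝓝 0)) :
    Tendsto (fun N : ℕ => s N / N) atTop (𝓝 0) := by
  have hsqrt : Tendsto Nat.sqrt atTop atTop :=
    tendsto_atTop_atTop.2 fun n => ⟨n ^ 2, fun N hN => Nat.le_sqrt'.2 hN⟩
  have hbound := (hsq.abs.add hdev).comp hsqrt
  simp only [abs_zero, add_zero] at hbound
  refine squeeze_zero_norm' ?_ hbound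
  filter_upwards [eventually_ge_atTop 1] with N hN
  set n := N.sqrt
  have hn : (0 : ℝ) < (n : ℝ) ^ 2 := by
    have : 0 < n := Nat.sqrt_pos.2 hN
    positivity
  have hnN : (n : ℝ) ^ 2 ≤ N := by exact_mod_cast Nat.sqrt_le' N
  have hdevN : |s N - s (n ^ 2)| ≤ sqBlockDeviation s n :=
    le_sup' (fun N => |s N - s (n ^ 2)|) (mem_Ico.2 ⟨Nat.sqrt_le' N, Nat.lt_succ_sqrt' N⟩)
  calc ‖s N / N‖ = |s N| / N := by rw [Real.norm_eq_abs, abs_div, Nat.abs_cast]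
    _ ≤ |s N| / (n : ℝ) ^ 2 := div_le_div_of_nonneg_left (abs_nonneg _) hn hnN
    _ ≤ (|s (n ^ 2)| + sqBlockDeviation s n) / (n : ℝ) ^ 2 := by
        gcongr
        linarith [abs_sub_abs_le_abs_sub (s N) (s (n ^ 2))]
    _ = _ := by
        rw [Function.comp_apply, abs_div, abs_of_pos hn, add_div]

lemma tsum_ne_top_of_le_ofReal_div_sq {f : ℕ → ℝ≥0∞} (h0 : f 0 ≠ ∞) (K : ℝ)
    (hf : ∀ n, 1 ≤ n → f n ≤ ENNReal.ofReal (K / (n : ℝ) ^ 2)) : ∑' n, f n ≠ ∞ := by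
  have hK : Summable fun n : ℕ => K / ((n + 1 : ℕ) : ℝ) ^ 2 := by
    simpa [div_eq_mul_one_div K] using
      ((summable_nat_add_iff 1).2 (Real.summable_one_div_nat_pow.2 one_lt_two)).mul_left K
  rw [tsum_eq_zero_add' ENNReal.summable, ENNReal.add_ne_top]
  exact ⟨h0, ne_top_of_le_ne_top (ENNReal.tsum_coe_ne_top_iff_summable.2 hK.toNNReal)
    (ENNReal.tsum_le_tsum fun n => hf (n + 1) n.succ_pos)⟩

lemma ae_tendsto_zero_of_tsum_measure_ne_top {Ω : Type*} [MeasurableSpace Ω] {μ : Measure Ω}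
    {X : ℕ → Ω → ℝ} (hX : ∀ ε > 0, ∑' n, μ {ω | ε ≤ |X n ω|} ≠ ∞) :
    ∀ᵐ ω ∂μ, Tendsto (fun n => X n ω) atTop (𝓝 0) := by
  have hBC : ∀ᵐ ω ∂μ, ∀ j : ℕ, ∀ᶠ n in atTop, ω ∉ {ω | 1 / ((j : ℝ) + 1) ≤ |X n ω|} :=
    ae_all_iff.2 fun j => ae_eventually_notMem (hX _ Nat.one_div_pos_of_nat)
  filter_upwards [hBC] with ω hω
  refine Metric.tendsto_nhds.2 fun ε hε => ?_
  obtain ⟨j, hj⟩ := exists_nat_one_div_lt hε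
  filter_upwards [hω j] with n hn
  rw [not_le] at hn
  rw [Real.dist_eq, sub_zero]
  exact hn.trans hj

section StrongLawL2

variable {Ω : Type*} [MeasurableSpace Ω] {μ : Measure Ω} [IsFiniteMeasure μ]
  {Z : ℕ → Ω → ℝ} {C : ℝ}

lemma measure_le_abs_sum_Ico_sub_integral_le (hL2 : ∀ k, MemLp (Z k) 2 μ)
    (hind : Pairwise fun i j => IndepFun (Z i) (Z j) μ) (hC : ∀ k, variance (Z k) μ ≤ C)
    (a b : ℕ) {c : ℝ} (hc : 0 < c) :
    μ {ω | c ≤ |∑ k ∈ Ico a b, (Z k ω - μ[Z k])|}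
      ≤ ENNReal.ofReal ((b - a : ℕ) * C / c ^ 2) := by
  set X := fun ω => ∑ k ∈ Ico a b, Z k ω
  have hX : MemLp X 2 μ := memLp_finsetSum _ fun k _ => hL2 k
  have hcenter : ∀ ω, X ω - μ[X] = ∑ k ∈ Ico a b, (Z k ω - μ[Z k]) := fun ω => by
    rw [integral_finsetSum _ fun k _ => (hL2 k).integrable one_le_two, sum_sub_distrib]
  have hvar : variance X μ ≤ (b - a : ℕ) * C := by
    have hX_eq : X = ∑ k ∈ Ico a b, Z k := by ext ω; simp [X]
    rw [hX_eq, IndepFun.variance_sum (fun k _ => hL2 k) fun i _ j _ hij => hind hij]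
    simpa using sum_le_sum fun k (_ : k ∈ Ico a b) => hC k
  calc μ {ω | c ≤ |∑ k ∈ Ico a b, (Z k ω - μ[Z k])|} = μ {ω | c ≤ |X ω - μ[X]|} := by
        simp_rw [hcenter]
    _ ≤ ENNReal.ofReal (variance X μ / c ^ 2) := meas_ge_le_variance_div_sq hX hc
    _ ≤ _ := by gcongr

lemma ae_tendsto_sum_range_sq_div (hL2 : ∀ k, MemLp (Z k) 2 μ)
    (hind : Pairwise fun i j => IndepFun (Z i) (Z j) μ) (hC : ∀ k, variance (Z k) μ ≤ C) :
    ∀ᵐ ω ∂μ, Tendsto (fun n : ℕ => (∑ k ∈ range (n ^ 2), (Z k ω - μ[Z k])) / (n : ℝ) ^ 2)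
      atTop (𝓝 0) := by
  refine ae_tendsto_zero_of_tsum_measure_ne_top fun ε hε =>
    tsum_ne_top_of_le_ofReal_div_sq (measure_ne_top _ _) (C / ε ^ 2) fun n hn => ?_
  have hn2 : (0 : ℝ) < (n : ℝ) ^ 2 := by positivity
  calc μ {ω | ε ≤ |(∑ k ∈ range (n ^ 2), (Z k ω - μ[Z k])) / (n : ℝ) ^ 2|}
      = μ {ω | ε * (n : ℝ) ^ 2 ≤ |∑ k ∈ Ico 0 (n ^ 2), (Z k ω - μ[Z k])|} := by
        simp_rw [abs_div, abs_of_pos hn2, le_div_iff₀ hn2, range_eq_Ico]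
    _ ≤ ENNReal.ofReal ((n ^ 2 - 0 : ℕ) * C / (ε * (n : ℝ) ^ 2) ^ 2) :=
        measure_le_abs_sum_Ico_sub_integral_le hL2 hind hC _ _ (by positivity)
    _ = ENNReal.ofReal (C / ε ^ 2 / (n : ℝ) ^ 2) := by
        congr 1
        rw [Nat.sub_zero, Nat.cast_pow]
        field_simp

lemma ae_tendsto_sqBlockDeviation_sum_range_div (hL2 : ∀ k, MemLp (Z k) 2 μ)
    (hind : Pairwise fun i j => IndepFun (Z i) (Z j) μ) (hC : ∀ k, variance (Z k) μ ≤ C) :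
    ∀ᵐ ω ∂μ, Tendsto (fun n : ℕ =>
      sqBlockDeviation (fun N => ∑ k ∈ range N, (Z k ω - μ[Z k])) n / (n : ℝ) ^ 2)
      atTop (𝓝 0) := by
  have hC0 : 0 ≤ C := (variance_nonneg _ _).trans (hC 0)
  refine ae_tendsto_zero_of_tsum_measure_ne_top fun ε hε =>
    tsum_ne_top_of_le_ofReal_div_sq (measure_ne_top _ _) (6 * C / ε ^ 2) fun n hn => ?_
  have hn2 : (0 : ℝ) < (n : ℝ) ^ 2 := by positivity
  have hsub : {ω | ε ≤ |sqBlockDeviation (fun N => ∑ k ∈ range N, (Z k ω - μ[Z k])) n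
      / (n : ℝ) ^ 2|} ⊆ ⋃ N ∈ Ico (n ^ 2) ((n + 1) ^ 2),
        {ω | ε * (n : ℝ) ^ 2 ≤ |∑ k ∈ Ico (n ^ 2) N, (Z k ω - μ[Z k])|} := by
    intro ω hω
    obtain ⟨N, hN, hdev⟩ :=
      exists_sqBlockDeviation_eq (fun N => ∑ k ∈ range N, (Z k ω - μ[Z k])) n
    rw [Set.mem_ofPred_eq, hdev, ← sum_Ico_eq_sub _ (mem_Ico.1 hN).1, abs_div, abs_abs,
      abs_of_pos hn2, le_div_iff₀ hn2] at hω
    exact Set.mem_biUnion hN hω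
  have hterm : ∀ N ∈ Ico (n ^ 2) ((n + 1) ^ 2),
      μ {ω | ε * (n : ℝ) ^ 2 ≤ |∑ k ∈ Ico (n ^ 2) N, (Z k ω - μ[Z k])|}
        ≤ ENNReal.ofReal (2 * n * C / (ε * (n : ℝ) ^ 2) ^ 2) := fun N hN => by
    refine (measure_le_abs_sum_Ico_sub_integral_le hL2 hind hC _ _ (by positivity)).trans
      (ENNReal.ofReal_le_ofReal ?_)
    have hN_lt : N < n ^ 2 + 2 * n + 1 := by simpa [add_sq] using (mem_Ico.1 hN).2
    gcongr
    exact_mod_cast (by omega : N - n ^ 2 ≤ 2 * n)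
  calc _ ≤ _ := measure_mono hsub
    _ ≤ _ := measure_biUnion_finset_le _ _
    _ ≤ ∑ N ∈ Ico (n ^ 2) ((n + 1) ^ 2), ENNReal.ofReal (2 * n * C / (ε * (n : ℝ) ^ 2) ^ 2) :=
        sum_le_sum hterm
    _ = ENNReal.ofReal ((2 * n + 1 : ℕ) * (2 * n * C / (ε * (n : ℝ) ^ 2) ^ 2)) := by
        rw [sum_const, Nat.card_Ico, ← ENNReal.ofReal_nsmul, nsmul_eq_mul, add_sq]
        congr 3
        omega
    _ ≤ ENNReal.ofReal (6 * C / ε ^ 2 / (n : ℝ) ^ 2) := by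
        refine ENNReal.ofReal_le_ofReal ?_
        have hn1 : (0 : ℝ) ≤ n - 1 := by
          rw [sub_nonneg]
          exact_mod_cast hn
        have hgap : 0 ≤ C * ε ^ 2 * (n : ℝ) ^ 2 * (2 * n * (n - 1)) := by positivity
        rw [div_div, ← mul_div_assoc, div_le_div_iff₀ (by positivity) (by positivity)]
        push_cast
        linarith

theorem ae_tendsto_sum_range_sub_integral_div (hL2 : ∀ k, MemLp (Z k) 2 μ)
    (hind : Pairwise fun i j => IndepFun (Z i) (Z j) μ) (hC : ∀ k, variance (Z k) μ ≤ C) :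
    ∀ᵐ ω ∂μ, Tendsto (fun N : ℕ => (∑ k ∈ range N, (Z k ω - μ[Z k])) / N) atTop (𝓝 0) := by
  filter_upwards [ae_tendsto_sum_range_sq_div hL2 hind hC,
    ae_tendsto_sqBlockDeviation_sum_range_div hL2 hind hC] with ω hsq hdev
  exact tendsto_div_of_tendsto_sq_of_sqBlockDeviation hsq hdev

end StrongLawL2

section ShiftedPowers

variable {Ω : Type*} [MeasurableSpace Ω] {μ : Measure Ω} {X : Ω → ℝ}

lemma integrable_pow_of_integrable_abs_pow [IsFiniteMeasure μ] (hXm : AEStronglyMeasurable X μ)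
    {d p : ℕ} (hdp : d ≤ p) (hX : Integrable (fun ω => |X ω| ^ p) μ) :
    Integrable (fun ω => X ω ^ d) μ := by
  refine (integrable_norm_iff (f := fun ω => X ω ^ d) (hXm.pow d)).1 ?_
  simpa only [norm_pow] using integrable_norm_pow_of_le hXm hdp (by simpa only [Real.norm_eq_abs])

lemma integral_const_add_pow (a : ℝ) (h : ℕ) (hX : ∀ d ≤ h, Integrable (fun ω => X ω ^ d) μ) :
    ∫ ω, (a + X ω) ^ h ∂μ
      = ∑ d ∈ range (h + 1), (h.choose d : ℝ) * a ^ (h - d) * ∫ ω, X ω ^ d ∂μ := by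
  simp_rw [add_comm a, add_pow]
  rw [integral_finsetSum _ fun d hd =>
    ((hX d (Nat.lt_succ_iff.1 (mem_range.1 hd))).mul_const _).mul_const _]
  refine sum_congr rfl fun d _ => ?_
  rw [integral_mul_const, integral_mul_const]
  ring

lemma sq_const_add_pow_le {a L : ℝ} (ha : |a| ≤ L) (b : ℝ) (h : ℕ) :
    ((a + b) ^ h) ^ 2 ≤ 2 ^ (2 * h - 1) * (L ^ (2 * h) + |b| ^ (2 * h)) :=
  calc ((a + b) ^ h) ^ 2 = |a + b| ^ (2 * h) := by
        rw [(even_two_mul h).pow_abs, ← pow_mul, mul_comm]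
    _ ≤ (L + |b|) ^ (2 * h) :=
        pow_le_pow_left₀ (abs_nonneg _) ((abs_add_le a b).trans (by linarith)) _
    _ ≤ 2 ^ (2 * h - 1) * (L ^ (2 * h) + |b| ^ (2 * h)) :=
        add_pow_le ((abs_nonneg a).trans ha) (abs_nonneg b) _

lemma memLp_two_const_add_pow [IsFiniteMeasure μ] (hXm : AEStronglyMeasurable X μ) (a : ℝ)
    (h : ℕ) (hX : Integrable (fun ω => |X ω| ^ (2 * h)) μ) :
    MemLp (fun ω => (a + X ω) ^ h) 2 μ := by
  have hbound : Integrable (fun ω => 2 ^ (2 * h - 1) * (|a| ^ (2 * h) + |X ω| ^ (2 * h))) μ :=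
    ((integrable_const _).add hX).const_mul _
  refine (memLp_two_iff_integrable_sq ((hXm.const_add a).pow h)).2 <|
    hbound.mono' (((hXm.const_add a).pow h).pow 2) (ae_of_all _ fun ω => ?_)
  rw [Real.norm_eq_abs, abs_of_nonneg (sq_nonneg _)]
  exact sq_const_add_pow_le le_rfl (X ω) h

lemma variance_const_add_pow_le [IsProbabilityMeasure μ] (hXm : AEStronglyMeasurable X μ)
    {a L : ℝ} (ha : |a| ≤ L) (h : ℕ) (hX : Integrable (fun ω => |X ω| ^ (2 * h)) μ) :
    variance (fun ω => (a + X ω) ^ h) μ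
      ≤ 2 ^ (2 * h - 1) * (L ^ (2 * h) + ∫ ω, |X ω| ^ (2 * h) ∂μ) :=
  calc variance (fun ω => (a + X ω) ^ h) μ ≤ ∫ ω, ((a + X ω) ^ h) ^ 2 ∂μ :=
        variance_le_expectation_sq ((hXm.const_add a).pow h)
    _ ≤ ∫ ω, 2 ^ (2 * h - 1) * (L ^ (2 * h) + |X ω| ^ (2 * h)) ∂μ :=
        integral_mono_of_nonneg (ae_of_all _ fun ω => sq_nonneg _)
          (((integrable_const _).add hX).const_mul _)
          (ae_of_all _ fun ω => sq_const_add_pow_le ha (X ω) h)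
    _ = 2 ^ (2 * h - 1) * (L ^ (2 * h) + ∫ ω, |X ω| ^ (2 * h) ∂μ) := by
        rw [integral_const_mul, integral_add (integrable_const _) hX, integral_const, probReal_univ,
          one_smul]

end ShiftedPowers

theorem statement8_general
    {Ω : Type*} [MeasurableSpace Ω] (μ : Measure Ω) [IsProbabilityMeasure μ]
    (h : ℕ)
    (x : ℕ → ℝ) (L : ℝ) (hx : ∀ k, |x k| ≤ L)
    (η : ℕ → Ω → ℝ) (hmeas : ∀ k, Measurable (η k))
    (hindep : iIndepFun η μ)
    (hident : ∀ k, IdentDistrib (η k) (η 0) μ μ)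
    (hmom : Integrable (fun ω => |η 0 ω| ^ (2 * h)) μ)
    (m : ℕ → ℝ) (hm : ∀ d, m d = ∫ ω, η 0 ω ^ d ∂μ)
    (y : ℕ → Ω → ℝ) (hy : ∀ k ω, y k ω = x k + η k ω) :
    ∀ᵐ ω ∂μ, Tendsto
      (fun N : ℕ => (1 / (N : ℝ)) * ∑ k ∈ Finset.range N,
        (y k ω ^ h - ∑ d ∈ Finset.range (h + 1),
          (h.choose d : ℝ) * x k ^ (h - d) * m d))
      atTop (nhds 0) := by
  have hmom_eq : ∀ k, ∫ ω, |η k ω| ^ (2 * h) ∂μ = ∫ ω, |η 0 ω| ^ (2 * h) ∂μ := fun k =>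
    ((hident k).comp (measurable_abs.pow_const _)).integral_eq
  have hmom_k : ∀ k, Integrable (fun ω => |η k ω| ^ (2 * h)) μ := fun k =>
    ((hident k).comp (measurable_abs.pow_const _)).integrable_iff.2 hmom
  have hmean : ∀ k, ∫ ω, (x k + η k ω) ^ h ∂μ
      = ∑ d ∈ range (h + 1), (h.choose d : ℝ) * x k ^ (h - d) * m d := fun k => by
    have hmoment : ∀ d, ∫ ω, η k ω ^ d ∂μ = m d := fun d => by
      rw [hm]
      exact ((hident k).comp (measurable_id.pow_const d)).integral_eq
    rw [integral_const_add_pow _ _ fun d hd =>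
      integrable_pow_of_integrable_abs_pow (hmeas k).aestronglyMeasurable (by omega) (hmom_k k)]
    simp_rw [hmoment]
  have hvar : ∀ k, variance (fun ω => (x k + η k ω) ^ h) μ
      ≤ 2 ^ (2 * h - 1) * (L ^ (2 * h) + ∫ ω, |η 0 ω| ^ (2 * h) ∂μ) := fun k => by
    simpa only [hmom_eq] using
      variance_const_add_pow_le (hmeas k).aestronglyMeasurable (hx k) h (hmom_k k)
  have hind : Pairwise fun i j =>
      IndepFun (fun ω => (x i + η i ω) ^ h) (fun ω => (x j + η j ω) ^ h) μ := fun i j hij =>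
    (hindep.indepFun hij).comp (φ := fun t => (x i + t) ^ h) (ψ := fun t => (x j + t) ^ h)
      (by fun_prop) (by fun_prop)
  filter_upwards [ae_tendsto_sum_range_sub_integral_div
    (fun k => memLp_two_const_add_pow (hmeas k).aestronglyMeasurable (x k) h (hmom_k k))
    hind hvar] with ω hω
  simpa only [hy, hmean, one_div_mul_eq_div] using hω

/-- entrywise form of Theorem 1 of the paper.
Let `h ≥ 1`, `x : ℕ → ℝ` deterministic with `|x_k| ≤ L`, and `(η_k)` iid real
random variables with `E[|η_0|^(2h)] < ∞` and moments `m_d = E[η_0^d]`.  With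
`y_k = x_k + η_k`, the corrected empirical average
`(1/N) ∑_{k<N} (y_k^h - ∑_{d=0}^h C(h,d) x_k^(h-d) m_d)` tends to `0` almost
surely. -/
theorem statement8
    {Ω : Type*} [MeasurableSpace Ω] (μ : Measure Ω) [IsProbabilityMeasure μ]
    (h : ℕ) (hh : 1 ≤ h)
    (x : ℕ → ℝ) (L : ℝ) (hx : ∀ k, |x k| ≤ L)
    (η : ℕ → Ω → ℝ) (hmeas : ∀ k, Measurable (η k))
    (hindep : iIndepFun η μ)
    (hident : ∀ k, IdentDistrib (η k) (η 0) μ μ)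
    (hmom : Integrable (fun ω => |η 0 ω| ^ (2 * h)) μ)
    (m : ℕ → ℝ) (hm : ∀ d, m d = ∫ ω, η 0 ω ^ d ∂μ)
    (y : ℕ → Ω → ℝ) (hy : ∀ k ω, y k ω = x k + η k ω) :
    ∀ᵐ ω ∂μ, Tendsto
      (fun N : ℕ => (1 / (N : ℝ)) * ∑ k ∈ Finset.range N,
        (y k ω ^ h - ∑ d ∈ Finset.range (h + 1),
          (h.choose d : ℝ) * x k ^ (h - d) * m d))
      atTop (nhds 0) :=
  statement8_general μ h x L hx η hmeas hindep hident hmom m hm y hy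
end

section
/- Let (ε_m)_{m ∈ ℕ} be square-integrable real-valued random variables with E[ε_m] = 0, E[ε_m²] = σ² for all m, and E[ε_m ε_{m'}] = 0 for m ≠ m'. Let M > 0 and 0 < a < 1, let g : ℕ × ℕ → ℝ satisfy |g(k,m)| ≤ M · a^{k−m} for all m ≤ k, and define y_i = Σ_{m=0}^{i} g(i,m) · ε_m. Then for all natural numbers i, j, |Cov(y_i, y_j)| = |E[y_i · y_j]| ≤ (σ² M² / (1 − a²)) · a^{|i−j|}. -/
/-!
Expanding the product `y i * y j` and using that the noise is orthogonal in `L²` with common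
variance `σ²`, only the diagonal terms survive: `E[y i * y j] = σ² ∑_{m ≤ min i j} g i m * g j m`.
Each summand is bounded by `M² a^(i-m) a^(j-m) = M² a^|i-j| (a²)^(min i j - m)`, and the geometric
series in `a²` sums to at most `1 / (1 - a²)`. Since the `y i` are centred, their covariance is
`E[y i * y j]`.
-/

open MeasureTheory Finset

section OrthogonalNoise

variable {Ω ι : Type*} [MeasurableSpace Ω] {μ : Measure Ω} {ε : ι → Ω → ℝ}

lemma integral_sum_const_mul_eq_zero (hint : ∀ m, Integrable (ε m) μ)
    (hmean : ∀ m, ∫ ω, ε m ω ∂μ = 0) (s : Finset ι) (c : ι → ℝ) :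
    ∫ ω, ∑ m ∈ s, c m * ε m ω ∂μ = 0 := by
  rw [integral_finsetSum _ fun m _ => (hint m).const_mul (c m)]
  simp [integral_const_mul, hmean]

lemma integral_mul_of_orthogonal [DecidableEq ι] {σ : ℝ}
    (hvar : ∀ m, ∫ ω, ε m ω ^ 2 ∂μ = σ ^ 2)
    (horth : ∀ m m', m ≠ m' → ∫ ω, ε m ω * ε m' ω ∂μ = 0) (m n : ι) :
    ∫ ω, ε m ω * ε n ω ∂μ = if m = n then σ ^ 2 else 0 := by
  split_ifs with h
  · subst h
    simp only [← hvar m, sq]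
  · exact horth m n h

lemma integral_sum_mul_sum_of_orthogonal [DecidableEq ι] (hL2 : ∀ m, MemLp (ε m) 2 μ) {σ : ℝ}
    (hvar : ∀ m, ∫ ω, ε m ω ^ 2 ∂μ = σ ^ 2)
    (horth : ∀ m m', m ≠ m' → ∫ ω, ε m ω * ε m' ω ∂μ = 0)
    (s t : Finset ι) (c d : ι → ℝ) :
    ∫ ω, (∑ m ∈ s, c m * ε m ω) * (∑ n ∈ t, d n * ε n ω) ∂μ
      = σ ^ 2 * ∑ m ∈ s ∩ t, c m * d m := by
  have hint : ∀ m n, Integrable (fun ω => c m * d n * (ε m ω * ε n ω)) μ := fun m n =>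
    ((hL2 m).integrable_mul (hL2 n)).const_mul _
  have hexpand : ∀ ω, (∑ m ∈ s, c m * ε m ω) * (∑ n ∈ t, d n * ε n ω)
      = ∑ m ∈ s, ∑ n ∈ t, c m * d n * (ε m ω * ε n ω) := fun ω => by
    simp_rw [sum_mul_sum, mul_mul_mul_comm]
  simp_rw [hexpand]
  rw [integral_finsetSum _ fun m _ => integrable_finsetSum _ fun n _ => hint m n]
  simp_rw [integral_finsetSum _ fun n _ => hint _ n, integral_const_mul,
    integral_mul_of_orthogonal hvar horth, mul_ite, mul_zero, sum_ite_eq, sum_ite_mem, mul_sum]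
  exact sum_congr rfl fun m _ => mul_comm _ _

end OrthogonalNoise

section GeometricDecay

variable {K : Type*} [Field K] [LinearOrder K] [IsStrictOrderedRing K]

lemma pow_sub_mul_pow_sub_eq {R : Type*} [Monoid R] (a : R) {i j m : ℕ} (hm : m ≤ min i j) :
    a ^ (i - m) * a ^ (j - m) = a ^ Nat.dist i j * (a ^ 2) ^ (min i j - m) := by
  rw [← pow_add, ← pow_mul, ← pow_add]
  congr 1
  simp only [Nat.dist]
  omega

lemma sum_pow_sub_mul_pow_sub_le {a : K} (ha0 : 0 ≤ a) (ha1 : a < 1) (i j : ℕ) :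
    ∑ m ∈ range (min i j + 1), a ^ (i - m) * a ^ (j - m) ≤ a ^ Nat.dist i j / (1 - a ^ 2) := by
  have hgeom : ∑ m ∈ range (min i j + 1), (a ^ 2) ^ (min i j - m) ≤ 1 / (1 - a ^ 2) := by
    have hreflect := sum_range_reflect (fun m => (a ^ 2) ^ m) (min i j + 1)
    simp only [add_tsub_cancel_right] at hreflect
    have hIco := geom_sum_Ico_le_of_lt_one (m := 0) (n := min i j + 1) (sq_nonneg a)
      (pow_lt_one₀ ha0 ha1 two_ne_zero)
    rwa [pow_zero, ← range_eq_Ico, ← hreflect] at hIco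
  calc ∑ m ∈ range (min i j + 1), a ^ (i - m) * a ^ (j - m)
      = a ^ Nat.dist i j * ∑ m ∈ range (min i j + 1), (a ^ 2) ^ (min i j - m) := by
        rw [mul_sum]
        exact sum_congr rfl fun m hm =>
          pow_sub_mul_pow_sub_eq a (Nat.lt_succ_iff.mp (mem_range.mp hm))
    _ ≤ a ^ Nat.dist i j * (1 / (1 - a ^ 2)) := by gcongr
    _ = a ^ Nat.dist i j / (1 - a ^ 2) := mul_one_div _ _

lemma abs_sum_mul_le_of_abs_le_pow {M a : K} (ha0 : 0 ≤ a) (ha1 : a < 1) {g : ℕ → ℕ → K}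
    (hg : ∀ m k, m ≤ k → |g k m| ≤ M * a ^ (k - m)) (i j : ℕ) :
    |∑ m ∈ range (min i j + 1), g i m * g j m| ≤ M ^ 2 / (1 - a ^ 2) * a ^ Nat.dist i j := by
  have hterm : ∀ m ∈ range (min i j + 1),
      |g i m * g j m| ≤ M ^ 2 * (a ^ (i - m) * a ^ (j - m)) := by
    intro m hm
    have hm : m ≤ min i j := Nat.lt_succ_iff.mp (mem_range.mp hm)
    have hi := hg m i (hm.trans (min_le_left i j))
    calc |g i m * g j m| = |g i m| * |g j m| := abs_mul _ _
      _ ≤ (M * a ^ (i - m)) * (M * a ^ (j - m)) :=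
        mul_le_mul hi (hg m j (hm.trans (min_le_right i j))) (abs_nonneg _)
          ((abs_nonneg _).trans hi)
      _ = M ^ 2 * (a ^ (i - m) * a ^ (j - m)) := by ring
  calc |∑ m ∈ range (min i j + 1), g i m * g j m|
      ≤ ∑ m ∈ range (min i j + 1), |g i m * g j m| := abs_sum_le_sum_abs _ _
    _ ≤ M ^ 2 * ∑ m ∈ range (min i j + 1), a ^ (i - m) * a ^ (j - m) := by
        rw [mul_sum]
        exact sum_le_sum hterm
    _ ≤ M ^ 2 * (a ^ Nat.dist i j / (1 - a ^ 2)) := by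
        gcongr
        exact sum_pow_sub_mul_pow_sub_le ha0 ha1 i j
    _ = M ^ 2 / (1 - a ^ 2) * a ^ Nat.dist i j := by ring

end GeometricDecay

theorem statement13_general
    {Ω : Type*} [MeasurableSpace Ω] (μ : Measure Ω) [IsProbabilityMeasure μ]
    (ε : ℕ → Ω → ℝ) (hL2 : ∀ m, MemLp (ε m) 2 μ)
    (σ : ℝ)
    (hmean : ∀ m, ∫ ω, ε m ω ∂μ = 0)
    (hvar : ∀ m, ∫ ω, ε m ω ^ 2 ∂μ = σ ^ 2)
    (horth : ∀ m m', m ≠ m' → ∫ ω, ε m ω * ε m' ω ∂μ = 0)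
    (M a : ℝ) (ha0 : 0 < a) (ha1 : a < 1)
    (g : ℕ → ℕ → ℝ)
    (hg : ∀ m k, m ≤ k → |g k m| ≤ M * a ^ (k - m))
    (y : ℕ → Ω → ℝ)
    (hy : ∀ i ω, y i ω = ∑ m ∈ Finset.range (i + 1), g i m * ε m ω)
    (i j : ℕ) :
    |(∫ ω, y i ω * y j ω ∂μ) - (∫ ω, y i ω ∂μ) * (∫ ω, y j ω ∂μ)|
        = |∫ ω, y i ω * y j ω ∂μ| ∧
    |∫ ω, y i ω * y j ω ∂μ| ≤ σ ^ 2 * M ^ 2 / (1 - a ^ 2) * a ^ Nat.dist i j := by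
  have hy' : y = fun k ω => ∑ m ∈ range (k + 1), g k m * ε m ω := funext₂ hy
  have hint : ∀ m, Integrable (ε m) μ := fun m => (hL2 m).integrable one_le_two
  have hcentred : ∀ k, ∫ ω, y k ω ∂μ = 0 := fun k => by
    rw [hy']
    exact integral_sum_const_mul_eq_zero hint hmean _ _
  have hdiag : ∫ ω, y i ω * y j ω ∂μ = σ ^ 2 * ∑ m ∈ range (min i j + 1), g i m * g j m := by
    rw [hy', integral_sum_mul_sum_of_orthogonal hL2 hvar horth, range_inter_range,
      Nat.add_min_add_right]
  refine ⟨by rw [hcentred, hcentred, mul_zero, sub_zero], ?_⟩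
  rw [hdiag, abs_mul, abs_of_nonneg (sq_nonneg σ), mul_div_assoc, mul_assoc]
  exact mul_le_mul_of_nonneg_left (abs_sum_mul_le_of_abs_le_pow ha0.le ha1 hg i j) (sq_nonneg σ)

/-- geometric covariance decay for a uniformly exponentially
stable LTV system, proof of Corollary 1 of the paper.
With `(ε_m)` square-integrable, zero-mean, variance `σ²`, pairwise uncorrelated,
and `|g(k,m)| ≤ M a^(k-m)` for `m ≤ k` (`M > 0`, `0 < a < 1`), the outputs
`y_i = ∑_{m=0}^i g(i,m) ε_m` satisfy
`|Cov(y_i, y_j)| = |E[y_i y_j]| ≤ (σ² M² / (1 - a²)) a^|i-j|`. -/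
theorem statement13
    {Ω : Type*} [MeasurableSpace Ω] (μ : Measure Ω) [IsProbabilityMeasure μ]
    (ε : ℕ → Ω → ℝ) (hL2 : ∀ m, MemLp (ε m) 2 μ)
    (σ : ℝ)
    (hmean : ∀ m, ∫ ω, ε m ω ∂μ = 0)
    (hvar : ∀ m, ∫ ω, ε m ω ^ 2 ∂μ = σ ^ 2)
    (horth : ∀ m m', m ≠ m' → ∫ ω, ε m ω * ε m' ω ∂μ = 0)
    (M a : ℝ) (hM : 0 < M) (ha0 : 0 < a) (ha1 : a < 1)
    (g : ℕ → ℕ → ℝ)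
    (hg : ∀ m k, m ≤ k → |g k m| ≤ M * a ^ (k - m))
    (y : ℕ → Ω → ℝ)
    (hy : ∀ i ω, y i ω = ∑ m ∈ Finset.range (i + 1), g i m * ε m ω)
    (i j : ℕ) :
    |(∫ ω, y i ω * y j ω ∂μ) - (∫ ω, y i ω ∂μ) * (∫ ω, y j ω ∂μ)|
        = |∫ ω, y i ω * y j ω ∂μ| ∧
    |∫ ω, y i ω * y j ω ∂μ| ≤ σ ^ 2 * M ^ 2 / (1 - a ^ 2) * a ^ Nat.dist i j :=
  statement13_general μ ε hL2 σ hmean hvar horth M a ha0 ha1 g hg y hy i j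
end
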